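/- Every Lebesgue-measurable homomorphism f : ℝ → ℂ with values in the unit circle S¹ (f(x+y) = f(x)·f(y) and |f(x)| = 1 for all x, y ∈ ℝ) is continuous. -/

import Mathlib

open MeasureTheory Real

/-! Averaging the functional equation over an interval `[a, b]` gives
`f y * ∫_a^b f = ∫_{y+a}^{y+b} f`, and the right-hand side is continuous in `y` for any locally
integrable `f`. By Lebesgue differentiation some interval integral of `f` is nonzero unless
`f = 0` a.e., so dividing by it exhibits `f` as a continuous function. -/

theorem MeasureTheory.LocallyIntegrable.ae_eq_zero_of_forall_intervalIntegral_eq_zero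
    {E : Type*} [NormedAddCommGroup E] [NormedSpace ℝ E] [CompleteSpace E] {f : ℝ → E}
    (hf : LocallyIntegrable f volume) (h : ∀ a b : ℝ, ∫ t in a..b, f t = 0) :
    f =ᵐ[volume] 0 := by
  filter_upwards [LocallyIntegrable.ae_hasDerivAt_integral hf] with x hx
  simp only [h] at hx
  exact (hx 0).unique (hasDerivAt_const x 0)

theorem MeasureTheory.LocallyIntegrable.continuous_intervalIntegral_add_left
    {E : Type*} [NormedAddCommGroup E] [NormedSpace ℝ E] {f : ℝ → E}
    (hf : LocallyIntegrable f volume) (a b : ℝ) :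
    Continuous fun y => ∫ t in y + a..y + b, f t := by
  have hII : ∀ u v : ℝ, IntervalIntegrable f volume u v := fun u v =>
    (hf.integrableOn_isCompact isCompact_uIcc).intervalIntegrable
  have hprim := intervalIntegral.continuous_primitive hII 0
  have hsub : ∀ y, ∫ t in y + a..y + b, f t
      = (∫ t in (0 : ℝ)..y + b, f t) - ∫ t in (0 : ℝ)..y + a, f t := fun y =>
    (intervalIntegral.integral_interval_sub_left (hII 0 _) (hII 0 _)).symm
  simp only [hsub]
  exact (hprim.comp (continuous_id.add continuous_const)).sub
    (hprim.comp (continuous_id.add continuous_const))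

theorem mul_intervalIntegral_eq_intervalIntegral_add_left_of_map_add_eq_mul
    {𝕜 : Type*} [NormedDivisionRing 𝕜] [NormedAlgebra ℝ 𝕜] {f : ℝ → 𝕜}
    (hf : ∀ x y, f (x + y) = f x * f y) (a b y : ℝ) :
    f y * ∫ t in a..b, f t = ∫ t in y + a..y + b, f t := by
  rw [← intervalIntegral.integral_comp_add_left, ← intervalIntegral.integral_const_mul]
  simp only [hf]

theorem MeasureTheory.LocallyIntegrable.continuous_of_map_add_eq_mul
    {𝕜 : Type*} [NormedDivisionRing 𝕜] [NormedAlgebra ℝ 𝕜] [CompleteSpace 𝕜] {f : ℝ → 𝕜}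
    (hf : LocallyIntegrable f volume) (hf0 : ¬ f =ᵐ[volume] 0)
    (hhom : ∀ x y, f (x + y) = f x * f y) : Continuous f := by
  obtain ⟨a, b, hab⟩ : ∃ a b : ℝ, ∫ t in a..b, f t ≠ 0 := by
    by_contra! h
    exact hf0 (hf.ae_eq_zero_of_forall_intervalIntegral_eq_zero h)
  have hf_eq : f = fun y => (∫ t in y + a..y + b, f t) * (∫ t in a..b, f t)⁻¹ := by
    funext y
    rw [← mul_intervalIntegral_eq_intervalIntegral_add_left_of_map_add_eq_mul hhom,
      mul_inv_cancel_right₀ hab]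
  rw [hf_eq]
  exact (hf.continuous_intervalIntegral_add_left a b).mul continuous_const

theorem measurable_character_continuous
    (f : ℝ → ℂ) (hmeas : Measurable f)
    (hcirc : ∀ x : ℝ, ‖f x‖ = 1)
    (hhom : ∀ x y : ℝ, f (x + y) = f x * f y) :
    Continuous f := by
  have hloc : LocallyIntegrable f volume :=
    (locallyIntegrable_const (1 : ℂ)).mono hmeas.aestronglyMeasurable
      (Filter.Eventually.of_forall fun x => by simp [hcirc x])
  refine hloc.continuous_of_map_add_eq_mul (fun hf0 => ?_) hhom
  obtain ⟨x, hx⟩ := hf0.exists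
  simpa [hcirc x] using congrArg norm hx
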